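/- A frequency vector x ∈ ℕ^p is an indispensable monomial if and only if the fiber F_{Ax} contains more than one B_{|x|−1}-equivalence class and the one-element set {x} forms a B_{|x|−1}-equivalence class of F_{Ax} by itself. -/

import Mathlib

open scoped BigOperators

section Defs

variable {ι κ : Type*} [Fintype ι]

/-- Embed a frequency vector `x ∈ ℕ^ι` into `ℤ^ι`. -/
def natToInt (x : ι → ℕ) : ι → ℤ := fun i => (x i : ℤ)

/-- The fiber of `t`: all frequency vectors `x` with `A x = t`. -/
def fiberOf (A : Matrix κ ι ℤ) (t : κ → ℤ) : Set (ι → ℕ) :=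
  {x | A.mulVec (natToInt x) = t}

/-- A move for `A`: an integer vector in the kernel of `A`. -/
def IsMove (A : Matrix κ ι ℤ) (z : ι → ℤ) : Prop := A.mulVec z = 0

/-- The positive part `z⁺` of an integer vector, as a frequency vector. -/
def posOf (z : ι → ℤ) : ι → ℕ := fun i => (z i).toNat

/-- The negative part `z⁻` of an integer vector, as a frequency vector. -/
def negOf (z : ι → ℤ) : ι → ℕ := fun i => (-z i).toNat

/-- The degree of a move: `deg z = |z⁺|`. -/
def degOf (z : ι → ℤ) : ℕ := ∑ i, posOf z i

/-- One step: add or subtract one move of `B`, staying in `ℕ^ι`. -/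
def MStep (B : Set (ι → ℤ)) (x y : ι → ℕ) : Prop :=
  ∃ z ∈ B, natToInt y = natToInt x + z ∨ natToInt y = natToInt x - z

/-- `y` is accessible from `x` by the moves of `B` (staying nonnegative throughout,
since all intermediate points are frequency vectors). -/
def Accessible (B : Set (ι → ℤ)) : (ι → ℕ) → (ι → ℕ) → Prop :=
  Relation.ReflTransGen (MStep B)

/-- A Markov basis: a finite set of moves such that every fiber forms a single
equivalence class for mutual accessibility. -/
def IsMarkovBasis (A : Matrix κ ι ℤ) (B : Set (ι → ℤ)) : Prop :=
  B.Finite ∧ (∀ z ∈ B, IsMove A z) ∧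
    ∀ t : κ → ℤ, ∀ x ∈ fiberOf A t, ∀ y ∈ fiberOf A t, Accessible B x y

/-- A minimal Markov basis: no proper subset is a Markov basis. -/
def IsMinimalMarkovBasis (A : Matrix κ ι ℤ) (B : Set (ι → ℤ)) : Prop :=
  IsMarkovBasis A B ∧ ∀ B' ⊂ B, ¬ IsMarkovBasis A B'

/-- An indispensable monomial: every Markov basis contains a move whose
positive or negative part is `x`. -/
def IsIndispensableMonomial (A : Matrix κ ι ℤ) (x : ι → ℕ) : Prop :=
  ∀ B : Set (ι → ℤ), IsMarkovBasis A B → ∃ z ∈ B, posOf z = x ∨ negOf z = x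

/-- `B_n`: the set of moves of degree at most `n`. -/
def Bmoves (A : Matrix κ ι ℤ) (n : ℕ) : Set (ι → ℤ) :=
  {z | IsMove A z ∧ degOf z ≤ n}

/-- The sample size `|t|` of a sufficient statistic `t` (well defined on nonempty
fibers under homogeneity). -/
noncomputable def sampleSize (A : Matrix κ ι ℤ) (t : κ → ℤ) : ℕ :=
  sInf {n | ∃ x ∈ fiberOf A t, ∑ i, x i = n}

/-- The `B_{|t|-1}`-equivalence classes of the fiber of `t`. -/
noncomputable def fiberClasses (A : Matrix κ ι ℤ) (t : κ → ℤ) : Set (Set (ι → ℕ)) :=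
  {C | ∃ x ∈ fiberOf A t,
    C = {y | y ∈ fiberOf A t ∧ Accessible (Bmoves A (sampleSize A t - 1)) x y}}

/-- Homogeneity: some rational vector `w` has `w ⬝ aᵢ = 1` for every column `aᵢ`. -/
def IsHomogeneousMatrix [Fintype κ] (A : Matrix κ ι ℤ) : Prop :=
  ∃ w : κ → ℚ, ∀ i : ι, ∑ j, w j * (A j i : ℚ) = 1

end Defs

/-!
Under homogeneity every move `z` has `|z⁺| = |z⁻|`. A move `z` can be added to `x` only if
`z⁻ ≤ x`, and then either `z⁻ = x` or `deg z = |z⁻| < |x|`. Hence if `{x}` is a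
`B_{|x|-1}`-class, a set of moves none of which has `x` as a part cannot leave `x`, so it
cannot connect a fiber with several classes.

Conversely, suppose `x` is `B_{|x|-1}`-connected to its whole fiber, or to some `y ≠ x` (then
adjoin the moves `y - y'`; their parts are not `x` because `|y| = |y'| = |x|`). Either way a
finite set `B'` of moves without part `x` connects the fiber of `x`. A step by a move `z` with
part `x` goes from `c + z⁻` to `c + z⁺`, and `z⁻, z⁺` lie in the fiber of `x`, so the step is
simulated by a translated `B'`-path. Removing the moves with part `x` from the Graver basis (a
finite Markov basis by Dickson's lemma) and adding `B'` gives a Markov basis without them.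
-/

open Finset Matrix Relation

section Vectors

variable {ι : Type*}

theorem natToInt_injective : Function.Injective (natToInt : (ι → ℕ) → ι → ℤ) :=
  fun x y h => funext fun i => by simpa [natToInt] using congrFun h i

theorem natToInt_add (x y : ι → ℕ) : natToInt (x + y) = natToInt x + natToInt y := by
  funext i; simp [natToInt]

theorem natToInt_posOf_sub_natToInt_negOf (z : ι → ℤ) :
    natToInt (posOf z) - natToInt (negOf z) = z := by
  funext i; simp only [natToInt, posOf, negOf, Pi.sub_apply]; omega

theorem posOf_neg (z : ι → ℤ) : posOf (-z) = negOf z := rfl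

theorem negOf_neg (z : ι → ℤ) : negOf (-z) = posOf z := by
  funext i; simp [negOf, posOf]

theorem posOf_natToInt_sub_le (x y : ι → ℕ) : posOf (natToInt x - natToInt y) ≤ x := by
  intro i; simp only [posOf, natToInt, Pi.sub_apply]; omega

theorem negOf_natToInt_sub_le (x y : ι → ℕ) : negOf (natToInt x - natToInt y) ≤ y := by
  intro i; simp only [negOf, natToInt, Pi.sub_apply]; omega

theorem exists_eq_add_negOf_eq_add_posOf {u v : ι → ℕ} {z : ι → ℤ}
    (h : natToInt v = natToInt u + z) : ∃ c, u = c + negOf z ∧ v = c + posOf z := by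
  refine ⟨u - negOf z, funext fun i => ?_, funext fun i => ?_⟩ <;>
  · have := congrFun h i
    simp only [natToInt, posOf, negOf, Pi.add_apply, Pi.sub_apply] at this ⊢
    omega

theorem eq_of_le_of_sum_le [Fintype ι] {x y : ι → ℕ} (hxy : x ≤ y) (h : ∑ i, y i ≤ ∑ i, x i) :
    x = y :=
  funext ((sum_eq_sum_iff_of_le fun i _ => hxy i).1 ((sum_le_sum fun i _ => hxy i).antisymm h)
    · (mem_univ _))

/-- `signParts w ≤ signParts z` is the conformal order: `w` is sign-compatible with `z` and
`|wᵢ| ≤ |zᵢ|` for all `i`. -/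
def signParts (z : ι → ℤ) : (ι → ℕ) × (ι → ℕ) := (posOf z, negOf z)

theorem signParts_injective : Function.Injective (signParts : (ι → ℤ) → (ι → ℕ) × (ι → ℕ)) := by
  intro z w h
  rw [← natToInt_posOf_sub_natToInt_negOf z, ← natToInt_posOf_sub_natToInt_negOf w]
  simp only [signParts, Prod.mk.injEq] at h
  rw [h.1, h.2]

end Vectors

section Accessibility

variable {ι : Type*} {B B' : Set (ι → ℤ)}

theorem MStep.symm {u v : ι → ℕ} (h : MStep B u v) : MStep B v u := by
  obtain ⟨z, hz, h | h⟩ := h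
  · exact ⟨z, hz, .inr (by rw [h, add_sub_cancel_right])⟩
  · exact ⟨z, hz, .inl (by rw [h, sub_add_cancel])⟩

instance : Std.Symm (MStep B) := ⟨fun _ _ => MStep.symm⟩

theorem Accessible.symm {u v : ι → ℕ} (h : Accessible B u v) : Accessible B v u :=
  Std.Symm.symm (r := ReflTransGen (MStep B)) _ _ h

theorem Accessible.mono (hBB' : B ⊆ B') {u v : ι → ℕ} (h : Accessible B u v) :
    Accessible B' u v :=
  ReflTransGen.mono (fun _ _ ⟨z, hz, h⟩ => ⟨z, hBB' hz, h⟩) _ _ h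

theorem Accessible.add_left (c : ι → ℕ) {u v : ι → ℕ} (h : Accessible B u v) :
    Accessible B (c + u) (c + v) :=
  ReflTransGen.lift (c + ·) (fun _ _ ⟨z, hz, h⟩ => ⟨z, hz, by
    rw [natToInt_add, natToInt_add]
    rcases h with h | h
    · exact .inl (by rw [h, add_assoc])
    · exact .inr (by rw [h, add_sub_assoc])⟩) _ _ h

theorem Accessible.diff_zero {u v : ι → ℕ} (h : Accessible B u v) : Accessible (B \ {0}) u v := by
  refine reflTransGen_closed (fun a b ⟨z, hzB, hab⟩ => ?_) _ _ h
  by_cases hz : z = 0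
  · have hba : natToInt b = natToInt a := by simpa [hz] using hab
    rw [natToInt_injective hba]
  · exact .single ⟨z, ⟨hzB, hz⟩, hab⟩

end Accessibility

section Moves

variable {ι κ : Type*} [Fintype ι] {A : Matrix κ ι ℤ}

theorem IsMove.neg {z : ι → ℤ} (hz : IsMove A z) : IsMove A (-z) := by
  rw [IsMove, mulVec_neg, hz, neg_zero]

theorem isMove_natToInt_sub {t : κ → ℤ} {x y : ι → ℕ} (hx : x ∈ fiberOf A t)
    (hy : y ∈ fiberOf A t) : IsMove A (natToInt y - natToInt x) := by
  rw [IsMove, mulVec_sub, hx, hy, sub_self]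

theorem IsMove.mulVec_natToInt_posOf {z : ι → ℤ} (hz : IsMove A z) :
    A *ᵥ natToInt (posOf z) = A *ᵥ natToInt (negOf z) := by
  rw [← sub_eq_zero, ← mulVec_sub, natToInt_posOf_sub_natToInt_negOf, hz]

theorem MStep.mulVec_natToInt_eq (hB : ∀ z ∈ B, IsMove A z) {u v : ι → ℕ} (h : MStep B u v) :
    A *ᵥ natToInt v = A *ᵥ natToInt u := by
  obtain ⟨z, hz, h | h⟩ := h <;>
  · have hz' : A *ᵥ z = 0 := hB z hz
    simp [h, mulVec_add, mulVec_sub, hz']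

end Moves

namespace IsHomogeneousMatrix

variable {ι κ : Type*} [Fintype ι] [Fintype κ] {A : Matrix κ ι ℤ}

theorem sum_eq_zero (hA : IsHomogeneousMatrix A) {z : ι → ℤ} (hz : IsMove A z) :
    ∑ i, z i = 0 := by
  obtain ⟨w, hw⟩ := hA
  have h : ∑ i, (z i : ℚ) = ∑ j, w j * ((A *ᵥ z) j : ℚ) := by
    simp only [mulVec, dotProduct, Int.cast_sum, Int.cast_mul, mul_sum]
    rw [sum_comm]
    simp_rw [← mul_assoc, ← sum_mul, hw, one_mul]
  rw [hz] at h
  exact_mod_cast (h.trans (by simp) : ∑ i, (z i : ℚ) = 0)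

theorem sum_posOf_eq_sum_negOf (hA : IsHomogeneousMatrix A) {z : ι → ℤ} (hz : IsMove A z) :
    ∑ i, posOf z i = ∑ i, negOf z i := by
  have h := hA.sum_eq_zero hz
  rw [← natToInt_posOf_sub_natToInt_negOf z] at h
  simp only [natToInt, Pi.sub_apply, sum_sub_distrib, sub_eq_zero] at h
  exact_mod_cast h

theorem degOf_neg (hA : IsHomogeneousMatrix A) {z : ι → ℤ} (hz : IsMove A z) :
    degOf (-z) = degOf z := by
  rw [degOf, degOf, posOf_neg, hA.sum_posOf_eq_sum_negOf hz]

theorem sum_eq_of_mem_fiberOf (hA : IsHomogeneousMatrix A) {t : κ → ℤ} {x y : ι → ℕ}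
    (hx : x ∈ fiberOf A t) (hy : y ∈ fiberOf A t) : ∑ i, x i = ∑ i, y i := by
  have h := hA.sum_eq_zero (isMove_natToInt_sub hx hy)
  simp only [natToInt, Pi.sub_apply, sum_sub_distrib, sub_eq_zero] at h
  exact_mod_cast h.symm

theorem finite_fiberOf (hA : IsHomogeneousMatrix A) (x : ι → ℕ) :
    (fiberOf A (A *ᵥ natToInt x)).Finite := by
  classical
  refine (Set.finite_Iic fun _ => ∑ i, x i).subset fun y hy i => ?_
  rw [hA.sum_eq_of_mem_fiberOf rfl hy]
  exact single_le_sum (fun _ _ => Nat.zero_le _) (mem_univ i)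

theorem finite_Bmoves (hA : IsHomogeneousMatrix A) (n : ℕ) : (Bmoves A n).Finite := by
  classical
  refine Set.Finite.of_finite_image ((Set.finite_Iic
    ((fun _ => n, fun _ => n) : (ι → ℕ) × (ι → ℕ))).subset ?_) signParts_injective.injOn
  rintro _ ⟨z, ⟨hz, hdeg⟩, rfl⟩
  have hneg : ∑ i, negOf z i ≤ n := hA.sum_posOf_eq_sum_negOf hz ▸ hdeg
  exact ⟨fun i => (single_le_sum (fun _ _ => Nat.zero_le _) (mem_univ i)).trans hdeg,
    fun i => (single_le_sum (fun _ _ => Nat.zero_le _) (mem_univ i)).trans hneg⟩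

theorem eq_zero_of_mem_Bmoves (hA : IsHomogeneousMatrix A) {x : ι → ℕ} {z : ι → ℤ}
    (hz : z ∈ Bmoves A (∑ i, x i - 1)) (hzx : posOf z = x ∨ negOf z = x) : z = 0 := by
  obtain ⟨hz, hdeg⟩ := hz
  have hsum := hA.sum_posOf_eq_sum_negOf hz
  have hx : degOf z = ∑ i, x i := by
    rcases hzx with rfl | rfl
    exacts [rfl, hsum]
  have h0 : ∑ i, posOf z i = 0 ∧ ∑ i, negOf z i = 0 := by unfold degOf at *; omega
  have hp : posOf z = 0 := funext fun i => sum_eq_zero_iff.1 h0.1 i (mem_univ i)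
  have hn : negOf z = 0 := funext fun i => sum_eq_zero_iff.1 h0.2 i (mem_univ i)
  rw [← natToInt_posOf_sub_natToInt_negOf z, hp, hn, sub_self]

theorem negOf_eq_or_degOf_lt (hA : IsHomogeneousMatrix A) {w : ι → ℤ} (hw : IsMove A w)
    {u v : ι → ℕ} (h : natToInt v = natToInt u + w) : negOf w = u ∨ degOf w < ∑ i, u i := by
  obtain ⟨c, rfl, -⟩ := exists_eq_add_negOf_eq_add_posOf h
  rw [degOf, hA.sum_posOf_eq_sum_negOf hw, or_iff_not_imp_right, not_lt]
  exact eq_of_le_of_sum_le fun i => Nat.le_add_left _ _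

end IsHomogeneousMatrix

section Graver

variable {ι κ : Type*} [Fintype ι] {A : Matrix κ ι ℤ}

def graverBasis (A : Matrix κ ι ℤ) : Set (ι → ℤ) :=
  {g | IsMove A g ∧ g ≠ 0 ∧ ∀ z, IsMove A z → z ≠ 0 → signParts z ≤ signParts g → z = g}

theorem exists_mem_graverBasis_signParts_le {z : ι → ℤ} (hz : IsMove A z) (hz0 : z ≠ 0) :
    ∃ g ∈ graverBasis A, signParts g ≤ signParts z := by
  obtain ⟨g, ⟨hg, hg0, hgz⟩, hmin⟩ := (InvImage.wf signParts wellFounded_lt).has_min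
    {w | IsMove A w ∧ w ≠ 0 ∧ signParts w ≤ signParts z} ⟨z, hz, hz0, le_rfl⟩
  refine ⟨g, ⟨hg, hg0, fun w hw hw0 hwg => ?_⟩, hgz⟩
  exact signParts_injective (hwg.eq_of_not_lt (hmin w ⟨hw, hw0, hwg.trans hgz⟩))

theorem graverBasis_finite (A : Matrix κ ι ℤ) : (graverBasis A).Finite := by
  refine Set.Finite.of_finite_image (WellQuasiOrderedLE.finite_of_isAntichain ?_)
    signParts_injective.injOn
  rintro _ ⟨g, hg, rfl⟩ _ ⟨g', hg', rfl⟩ hne hle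
  exact hne (congrArg signParts (hg'.2.2 g hg.1 hg.2.1 hle))

theorem accessible_graverBasis {t : κ → ℤ} {x y : ι → ℕ} (hx : x ∈ fiberOf A t)
    (hy : y ∈ fiberOf A t) : Accessible (graverBasis A) x y := by
  induction x using (InvImage.wf (fun x => signParts (natToInt y - natToInt x))
    wellFounded_lt).induction with
  | _ x ih =>
  generalize hz : natToInt y - natToInt x = z
  by_cases hz0 : z = 0
  · rw [natToInt_injective (sub_eq_zero.1 (hz.trans hz0))]
    exact .refl
  obtain ⟨g, hg, hgz⟩ := exists_mem_graverBasis_signParts_le (hz ▸ isMove_natToInt_sub hx hy) hz0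
  -- `g⁻ ≤ z⁻ ≤ x`, so `x + g` is again a frequency vector
  obtain ⟨x₁, hx₁⟩ : ∃ x₁ : ι → ℕ, natToInt x₁ = natToInt x + g := by
    refine ⟨fun i => (x i + g i).toNat, funext fun i => ?_⟩
    have hgi := hgz.2 i
    have hzi := congrFun hz i
    simp only [signParts, negOf, natToInt, Pi.sub_apply, Pi.add_apply] at hgi hzi ⊢
    omega
  have hstep : MStep (graverBasis A) x x₁ := ⟨g, hg, .inl hx₁⟩
  have hx₁t : x₁ ∈ fiberOf A t := (hstep.mulVec_natToInt_eq fun _ hg => hg.1).trans hx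
  refine .head hstep (ih x₁ ?_ hx₁t)
  have hres : natToInt y - natToInt x₁ = z - g := by rw [hx₁, ← hz, sub_add_eq_sub_sub]
  show signParts (natToInt y - natToInt x₁) < signParts (natToInt y - natToInt x)
  rw [hres, hz]
  refine lt_of_le_of_ne ⟨fun i => ?_, fun i => ?_⟩
    (fun h => hg.2.1 (by simpa using signParts_injective h)) <;>
  · have hp := hgz.1 i
    have hn := hgz.2 i
    simp only [signParts, posOf, negOf, Pi.sub_apply] at hp hn ⊢
    omega

theorem isMarkovBasis_graverBasis (A : Matrix κ ι ℤ) : IsMarkovBasis A (graverBasis A) :=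
  ⟨graverBasis_finite A, fun _ hg => hg.1, fun _ _ hx _ hy => accessible_graverBasis hx hy⟩

end Graver

section Indispensable

variable {ι κ : Type*} [Fintype ι] {A : Matrix κ ι ℤ} {B' : Set (ι → ℤ)} {x : ι → ℕ}

-- the step is `c + w⁻ ↦ c + w⁺`, and `w⁻`, `w⁺` both lie in the fiber of `x`
theorem accessible_of_natToInt_eq_add
    (hx : ∀ y ∈ fiberOf A (A *ᵥ natToInt x), Accessible B' x y) {w : ι → ℤ} (hw : IsMove A w)
    (hwx : posOf w = x ∨ negOf w = x) {u v : ι → ℕ} (h : natToInt v = natToInt u + w) :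
    Accessible B' u v := by
  obtain ⟨c, rfl, rfl⟩ := exists_eq_add_negOf_eq_add_posOf h
  have hneg : negOf w ∈ fiberOf A (A *ᵥ natToInt x) := by
    rcases hwx with rfl | rfl
    exacts [hw.mulVec_natToInt_posOf.symm, rfl]
  have hpos : posOf w ∈ fiberOf A (A *ᵥ natToInt x) := by
    rcases hwx with rfl | rfl
    exacts [rfl, hw.mulVec_natToInt_posOf]
  exact Accessible.add_left c ((hx _ hneg).symm.trans (hx _ hpos))

theorem IsMarkovBasis.sep_union {B : Set (ι → ℤ)} (hB : IsMarkovBasis A B) (hB'fin : B'.Finite)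
    (hB' : ∀ z ∈ B', IsMove A z) (hx : ∀ y ∈ fiberOf A (A *ᵥ natToInt x), Accessible B' x y) :
    IsMarkovBasis A ({z ∈ B | ¬(posOf z = x ∨ negOf z = x)} ∪ B') := by
  refine ⟨(hB.1.subset (Set.sep_subset _ _)).union hB'fin,
    fun z hz => hz.elim (fun hz => hB.2.1 z hz.1) (hB' z), fun t u hu v hv => ?_⟩
  refine reflTransGen_closed (fun a b ⟨z, hzB, hab⟩ => ?_) _ _ (hB.2.2 t u hu v hv)
  by_cases hzx : posOf z = x ∨ negOf z = x
  · refine Accessible.mono Set.subset_union_right ?_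
    have hz := hB.2.1 z hzB
    rcases hab with hab | hab
    · exact accessible_of_natToInt_eq_add hx hz hzx hab
    · refine accessible_of_natToInt_eq_add hx hz.neg ?_ (by rw [hab, sub_eq_add_neg])
      rwa [posOf_neg, negOf_neg, or_comm]
  · exact .single ⟨z, .inl ⟨hzB, hzx⟩, hab⟩

theorem not_isIndispensableMonomial_of_accessible (hB'fin : B'.Finite)
    (hB' : ∀ z ∈ B', IsMove A z) (hB'x : ∀ z ∈ B', ¬(posOf z = x ∨ negOf z = x))
    (hx : ∀ y ∈ fiberOf A (A *ᵥ natToInt x), Accessible B' x y) :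
    ¬ IsIndispensableMonomial A x := fun hind => by
  obtain ⟨z, hz | hz, hzx⟩ := hind _ ((isMarkovBasis_graverBasis A).sep_union hB'fin hB' hx)
  exacts [hz.2 hzx, hB'x z hz hzx]

end Indispensable

namespace IsHomogeneousMatrix

variable {ι κ : Type*} [Fintype ι] [Fintype κ] {A : Matrix κ ι ℤ} {x : ι → ℕ}

theorem exists_not_accessible_of_isIndispensableMonomial (hA : IsHomogeneousMatrix A)
    (hind : IsIndispensableMonomial A x) :
    ∃ y₁ ∈ fiberOf A (A *ᵥ natToInt x), ∃ y₂ ∈ fiberOf A (A *ᵥ natToInt x),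
      ¬ Accessible (Bmoves A (∑ i, x i - 1)) y₁ y₂ := by
  by_contra! hF
  exact not_isIndispensableMonomial_of_accessible ((hA.finite_Bmoves _).sdiff)
    (fun z hz => hz.1.1) (fun z hz hzx => hz.2 (hA.eq_zero_of_mem_Bmoves hz.1 hzx))
    (fun y hy => (hF x rfl y hy).diff_zero) hind

theorem eq_of_accessible_of_isIndispensableMonomial (hA : IsHomogeneousMatrix A)
    (hind : IsIndispensableMonomial A x) {y : ι → ℕ} (hy : y ∈ fiberOf A (A *ᵥ natToInt x))
    (hxy : Accessible (Bmoves A (∑ i, x i - 1)) x y) : y = x := by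
  by_contra hyx
  set F := fiberOf A (A *ᵥ natToInt x)
  -- every other point `y'` of the fiber is one step from `y`, by the move `y - y'`
  set M := (fun y' => natToInt y - natToInt y') '' (F \ {x, y})
  have hsum : ∀ {y'}, y' ∈ F → ∑ i, y' i = ∑ i, x i := fun hy' => hA.sum_eq_of_mem_fiberOf hy' rfl
  refine not_isIndispensableMonomial_of_accessible (B' := (Bmoves A (∑ i, x i - 1) \ {0}) ∪ M)
    (((hA.finite_Bmoves _).sdiff).union ((hA.finite_fiberOf x).sdiff.image _)) ?_ ?_ ?_ hind
  · rintro z (hz | ⟨y', hy', rfl⟩)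
    exacts [hz.1.1, isMove_natToInt_sub hy'.1 hy]
  · rintro z (hz | ⟨y', ⟨hy', hy'xy⟩, rfl⟩) (hzx | hzx)
    · exact hz.2 (hA.eq_zero_of_mem_Bmoves hz.1 (.inl hzx))
    · exact hz.2 (hA.eq_zero_of_mem_Bmoves hz.1 (.inr hzx))
    · exact hyx (eq_of_le_of_sum_le (hzx ▸ posOf_natToInt_sub_le y y') (hsum hy).le).symm
    · exact hy'xy (.inl (eq_of_le_of_sum_le (hzx ▸ negOf_natToInt_sub_le y y') (hsum hy').le).symm)
  intro y' hy'
  have hxy' : Accessible ((Bmoves A (∑ i, x i - 1) \ {0}) ∪ M) x y :=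
    hxy.diff_zero.mono Set.subset_union_left
  by_cases hy'xy : y' ∈ ({x, y} : Set (ι → ℕ))
  · rcases hy'xy with rfl | rfl
    exacts [.refl, hxy']
  · exact hxy'.tail ⟨_, .inr ⟨y', ⟨hy', hy'xy⟩, rfl⟩, .inr (sub_sub_cancel _ _).symm⟩

theorem isIndispensableMonomial_of_forall_accessible_eq (hA : IsHomogeneousMatrix A)
    (hF : ∃ y₁ ∈ fiberOf A (A *ᵥ natToInt x), ∃ y₂ ∈ fiberOf A (A *ᵥ natToInt x),
      ¬ Accessible (Bmoves A (∑ i, x i - 1)) y₁ y₂)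
    (hx : ∀ y ∈ fiberOf A (A *ᵥ natToInt x), Accessible (Bmoves A (∑ i, x i - 1)) x y → y = x) :
    IsIndispensableMonomial A x := by
  intro B hB
  by_contra hBx
  have hstep : ∀ v, MStep B x v → v = x := by
    rintro v ⟨z, hzB, h⟩
    have hz := hB.2.1 z hzB
    obtain ⟨w, hw, hwx, hdeg, hv⟩ : ∃ w, IsMove A w ∧ ¬(posOf w = x ∨ negOf w = x) ∧
        degOf w = degOf z ∧ natToInt v = natToInt x + w := by
      rcases h with h | h
      · exact ⟨z, hz, fun hzx => hBx ⟨z, hzB, hzx⟩, rfl, h⟩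
      · refine ⟨-z, hz.neg, ?_, hA.degOf_neg hz, by rw [h, sub_eq_add_neg]⟩
        rw [posOf_neg, negOf_neg, or_comm]
        exact fun hzx => hBx ⟨z, hzB, hzx⟩
    rcases hA.negOf_eq_or_degOf_lt hw hv with hwx' | hlt
    · exact absurd (.inr hwx') hwx
    · have hxv : MStep (Bmoves A (∑ i, x i - 1)) x v := ⟨z, ⟨hz, by omega⟩, h⟩
      exact hx v (hxv.mulVec_natToInt_eq fun _ hz => hz.1) (.single hxv)
  have hclass : ∀ v, Accessible B x v → v = x := fun v h => by
    induction h with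
    | refl => rfl
    | tail _ hs ih => exact hstep _ (ih ▸ hs)
  obtain ⟨y₁, hy₁, y₂, hy₂, hy⟩ := hF
  rw [hclass y₁ (hB.2.2 _ x rfl y₁ hy₁), hclass y₂ (hB.2.2 _ x rfl y₂ hy₂)] at hy
  exact hy .refl

end IsHomogeneousMatrix

theorem indispensableMonomial_iff_singleton_class_general
    {p d : ℕ}
    (A : Matrix (Fin d) (Fin p) ℤ) (hA : IsHomogeneousMatrix A) (x : Fin p → ℕ) :
    IsIndispensableMonomial A x ↔
      ((∃ y₁ ∈ fiberOf A (A.mulVec (natToInt x)), ∃ y₂ ∈ fiberOf A (A.mulVec (natToInt x)),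
          ¬ Accessible (Bmoves A ((∑ i, x i) - 1)) y₁ y₂) ∧
        ∀ y ∈ fiberOf A (A.mulVec (natToInt x)),
          Accessible (Bmoves A ((∑ i, x i) - 1)) x y → y = x) :=
  ⟨fun hind => ⟨hA.exists_not_accessible_of_isIndispensableMonomial hind,
      fun _ hy hxy => hA.eq_of_accessible_of_isIndispensableMonomial hind hy hxy⟩,
    fun ⟨hF, hx⟩ => hA.isIndispensableMonomial_of_forall_accessible_eq hF hx⟩

/-- `x` is an indispensable monomial iff the fiber of `Ax` contains more
than one `B_{|x|-1}`-equivalence class and `{x}` forms such an equivalence class by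
itself. -/
theorem indispensableMonomial_iff_singleton_class
    {p d : ℕ} (hp : 0 < p) (hd : 0 < d)
    (A : Matrix (Fin d) (Fin p) ℤ) (hA : IsHomogeneousMatrix A) (x : Fin p → ℕ) :
    IsIndispensableMonomial A x ↔
      ((∃ y₁ ∈ fiberOf A (A.mulVec (natToInt x)), ∃ y₂ ∈ fiberOf A (A.mulVec (natToInt x)),
          ¬ Accessible (Bmoves A ((∑ i, x i) - 1)) y₁ y₂) ∧
        ∀ y ∈ fiberOf A (A.mulVec (natToInt x)),
          Accessible (Bmoves A ((∑ i, x i) - 1)) x y → y = x) :=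
  indispensableMonomial_iff_singleton_class_general A hA x
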